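/- (Theorem 3.) Consider the linear constrained optimal control problem: maximize J(x₀,u) = ∑_{t=0}^{t_f} (E x_t + F u_t) subject to x_{t+1} = A x_t + B u_t, u_t ≤ u_max, and C x_t + D u_t ≤ y_max componentwise for all t ∈ {0,…,t_f}, where A ∈ ℝ^{n×n}, B ∈ ℝ^{n×1}, C ∈ ℝ^{p×n}, D ∈ ℝ^{p×1}, E ∈ ℝ^{1×n}, F ∈ ℝ are entrywise nonnegative and every entry of D is strictly positive. Define the impulse response g_0 = D and g_t = C A^{t−1} B for t ≥ 1, and assume g is decreasing on the horizon: g_t ≥ g_{t+1} componentwise for all t ∈ {0,…,t_f−1}. If an optimal solution exists, then there is an optimal solution u* with trajectory x* that makes at least one inequality constraint active at every time step: for every t ∈ {0,…,t_f}, either u*_t = u_max or (C x*_t + D u*_t)_i = (y_max)_i for some i ∈ {1,…,p}. -/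

import Mathlib

open Finset Matrix

/-- Trajectory of the linear system `x_{t+1} = A x_t + B u_t`. -/
noncomputable def ltraj {n : ℕ} (A : Matrix (Fin n) (Fin n) ℝ) (B : Fin n → ℝ)
    (x₀ : Fin n → ℝ) (u : ℕ → ℝ) : ℕ → (Fin n → ℝ)
  | 0 => x₀
  | t + 1 => A.mulVec (ltraj A B x₀ u t) + u t • B

/-- Feasibility: `u_t ≤ u_max` and `C x_t + D u_t ≤ y_max` componentwise for all `t ≤ t_f`. -/
def LFeasible {n p : ℕ} (A : Matrix (Fin n) (Fin n) ℝ) (B : Fin n → ℝ)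
    (C : Matrix (Fin p) (Fin n) ℝ) (D : Fin p → ℝ) (x₀ : Fin n → ℝ)
    (umax : ℝ) (ymax : Fin p → ℝ) (tf : ℕ) (u : ℕ → ℝ) : Prop :=
  ∀ t ≤ tf, u t ≤ umax ∧ ∀ i, C.mulVec (ltraj A B x₀ u t) i + D i * u t ≤ ymax i

/-- The linear cost `J(x₀,u) = ∑_{t=0}^{t_f} (E x_t + F u_t)`. -/
noncomputable def LCost {n : ℕ} (A : Matrix (Fin n) (Fin n) ℝ) (B : Fin n → ℝ)
    (E : Fin n → ℝ) (F : ℝ) (x₀ : Fin n → ℝ) (tf : ℕ) (u : ℕ → ℝ) : ℝ :=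
  ∑ t ∈ Finset.range (tf + 1), (E ⬝ᵥ ltraj A B x₀ u t + F * u t)

/-- Optimality for the linear problem. -/
def LOptimal {n p : ℕ} (A : Matrix (Fin n) (Fin n) ℝ) (B : Fin n → ℝ)
    (C : Matrix (Fin p) (Fin n) ℝ) (D : Fin p → ℝ) (E : Fin n → ℝ) (F : ℝ)
    (x₀ : Fin n → ℝ) (umax : ℝ) (ymax : Fin p → ℝ) (tf : ℕ) (u : ℕ → ℝ) : Prop :=
  LFeasible A B C D x₀ umax ymax tf u ∧
    ∀ v, LFeasible A B C D x₀ umax ymax tf v →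
      LCost A B E F x₀ tf v ≤ LCost A B E F x₀ tf u

/-- The impulse response: `g_0 = D`, `g_t = C A^{t-1} B` for `t ≥ 1`. -/
noncomputable def impulse {n p : ℕ} (A : Matrix (Fin n) (Fin n) ℝ) (B : Fin n → ℝ)
    (C : Matrix (Fin p) (Fin n) ℝ) (D : Fin p → ℝ) : ℕ → (Fin p → ℝ)
  | 0 => D
  | t + 1 => C.mulVec ((A ^ t).mulVec B)


section BangRideAux

open Finset Matrix

private lemma mulVec_sumF {m k : ℕ} (M : Matrix (Fin m) (Fin k) ℝ) (s : Finset ℕ)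
    (f : ℕ → Fin k → ℝ) : M.mulVec (∑ i ∈ s, f i) = ∑ i ∈ s, M.mulVec (f i) := by
  simp only [← Matrix.mulVecLin_apply, map_sum]

private lemma dot_sumF {k : ℕ} (v : Fin k → ℝ) (s : Finset ℕ) (f : ℕ → Fin k → ℝ) :
    v ⬝ᵥ (∑ i ∈ s, f i) = ∑ i ∈ s, v ⬝ᵥ f i := by
  simp [dotProduct, Finset.mul_sum, Finset.sum_apply]
  rw [Finset.sum_comm]

private lemma ltraj_closed {n : ℕ} (A : Matrix (Fin n) (Fin n) ℝ) (B : Fin n → ℝ)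
    (x₀ : Fin n → ℝ) (u : ℕ → ℝ) (t : ℕ) :
    ltraj A B x₀ u t
      = (A ^ t).mulVec x₀ + ∑ s ∈ Finset.range t, u s • (A ^ (t - 1 - s)).mulVec B := by
  induction t with
  | zero => simp [ltraj]
  | succ t ih =>
    show A.mulVec (ltraj A B x₀ u t) + u t • B = _
    rw [ih, Matrix.mulVec_add, mulVec_sumF, Finset.sum_range_succ]
    have h1 : A.mulVec ((A ^ t).mulVec x₀) = (A ^ (t + 1)).mulVec x₀ := by
      rw [Matrix.mulVec_mulVec, ← pow_succ']
    have h2 : ∀ s ∈ Finset.range t,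
        A.mulVec (u s • (A ^ (t - 1 - s)).mulVec B) = u s • (A ^ (t + 1 - 1 - s)).mulVec B := by
      intro s hs
      simp only [Finset.mem_range] at hs
      have he : t - 1 - s + 1 = t + 1 - 1 - s := by omega
      rw [Matrix.mulVec_smul, Matrix.mulVec_mulVec, ← pow_succ', he]
    rw [h1, Finset.sum_congr rfl h2]
    have h3 : u t • (A ^ (t + 1 - 1 - t)).mulVec B = u t • B := by simp
    rw [h3, add_assoc]

private lemma triangleF (φ : ℕ → ℕ → ℝ) (N : ℕ) :
    ∑ t ∈ Finset.range N, ∑ s ∈ Finset.range t, φ s t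
      = ∑ s ∈ Finset.range N, ∑ t ∈ Finset.Ico (s + 1) N, φ s t := by
  induction N with
  | zero => simp
  | succ N ih =>
    rw [Finset.sum_range_succ, ih, Finset.sum_range_succ]
    have h1 : ∀ s ∈ Finset.range N,
        ∑ t ∈ Finset.Ico (s + 1) (N + 1), φ s t
          = (∑ t ∈ Finset.Ico (s + 1) N, φ s t) + φ s N := by
      intro s hs
      simp at hs
      exact Finset.sum_Ico_succ_top hs _
    rw [Finset.sum_congr rfl h1, Finset.sum_add_distrib]
    simp

private lemma out_closed {n p : ℕ} (A : Matrix (Fin n) (Fin n) ℝ) (B : Fin n → ℝ)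
    (C : Matrix (Fin p) (Fin n) ℝ) (D : Fin p → ℝ) (x₀ : Fin n → ℝ)
    (u : ℕ → ℝ) (t : ℕ) (i : Fin p) :
    C.mulVec (ltraj A B x₀ u t) i + D i * u t
      = C.mulVec ((A ^ t).mulVec x₀) i
        + ∑ s ∈ Finset.range (t + 1), impulse A B C D (t - s) i * u s := by
  rw [ltraj_closed, Matrix.mulVec_add, mulVec_sumF, Finset.sum_range_succ]
  have h2 : ∀ s ∈ Finset.range t,
      Matrix.mulVec C (u s • (A ^ (t - 1 - s)).mulVec B) i
        = impulse A B C D (t - s) i * u s := by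
    intro s hs
    simp only [Finset.mem_range] at hs
    have he : t - s = (t - 1 - s) + 1 := by omega
    rw [Matrix.mulVec_smul, he]
    show (u s • C.mulVec ((A ^ (t - 1 - s)).mulVec B)) i = _
    rw [show impulse A B C D (t - 1 - s + 1) = C.mulVec ((A ^ (t - 1 - s)).mulVec B) from rfl]
    simp [mul_comm]
  have h3 : (∑ s ∈ Finset.range t, Matrix.mulVec C (u s • (A ^ (t - 1 - s)).mulVec B)) i
      = ∑ s ∈ Finset.range t, impulse A B C D (t - s) i * u s := by
    rw [Finset.sum_apply]
    exact Finset.sum_congr rfl h2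
  simp only [Pi.add_apply]
  rw [h3, show impulse A B C D (t - t) = D by simp [impulse], add_assoc]

private lemma cost_closed {n : ℕ} (A : Matrix (Fin n) (Fin n) ℝ) (B : Fin n → ℝ)
    (E : Fin n → ℝ) (F : ℝ) (x₀ : Fin n → ℝ) (tf : ℕ) (v : ℕ → ℝ) :
    LCost A B E F x₀ tf v
      = (∑ t ∈ Finset.range (tf + 1), E ⬝ᵥ (A ^ t).mulVec x₀)
        + ∑ s ∈ Finset.range (tf + 1),
            (F + ∑ k ∈ Finset.range (tf - s), E ⬝ᵥ (A ^ k).mulVec B) * v s := by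
  have hterm : ∀ t, E ⬝ᵥ ltraj A B x₀ v t
      = E ⬝ᵥ (A ^ t).mulVec x₀
        + ∑ s ∈ Finset.range t, (E ⬝ᵥ (A ^ (t - 1 - s)).mulVec B) * v s := by
    intro t
    rw [ltraj_closed, dotProduct_add, dot_sumF]
    congr 1
    refine Finset.sum_congr rfl fun s _ => ?_
    rw [dotProduct_smul, smul_eq_mul, mul_comm]
  unfold LCost
  calc ∑ t ∈ Finset.range (tf + 1), (E ⬝ᵥ ltraj A B x₀ v t + F * v t)
      = (∑ t ∈ Finset.range (tf + 1), E ⬝ᵥ (A ^ t).mulVec x₀)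
        + ((∑ t ∈ Finset.range (tf + 1),
            ∑ s ∈ Finset.range t, (E ⬝ᵥ (A ^ (t - 1 - s)).mulVec B) * v s)
          + ∑ t ∈ Finset.range (tf + 1), F * v t) := by
        rw [← Finset.sum_add_distrib, ← Finset.sum_add_distrib]
        exact Finset.sum_congr rfl fun t _ => by rw [hterm t, add_assoc]
    _ = _ := by
        congr 1
        rw [triangleF (fun s t => (E ⬝ᵥ (A ^ (t - 1 - s)).mulVec B) * v s) (tf + 1)]
        rw [← Finset.sum_add_distrib]
        refine Finset.sum_congr rfl fun s hs => ?_
        simp only [Finset.mem_range] at hs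
        have he : tf + 1 - (s + 1) = tf - s := by omega
        rw [Finset.sum_Ico_eq_sum_range, he, add_mul, ← Finset.sum_mul]
        have hk : ∀ k ∈ Finset.range (tf - s),
            (E ⬝ᵥ (A ^ (s + 1 + k - 1 - s)).mulVec B) = (E ⬝ᵥ (A ^ k).mulVec B) := by
          intro k _
          have hkk : s + 1 + k - 1 - s = k := by omega
          rw [hkk]
        rw [Finset.sum_congr rfl hk]
        ring

/-- The greedy (maximal) admissible input at a given state. -/
noncomputable def uopt {n p : ℕ} (C : Matrix (Fin p) (Fin n) ℝ) (D : Fin p → ℝ)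
    (umax : ℝ) (ymax : Fin p → ℝ) (x : Fin n → ℝ) : ℝ :=
  if h : (Finset.univ : Finset (Fin p)).Nonempty then
    min umax (Finset.univ.inf' h fun i => (ymax i - C.mulVec x i) / D i)
  else umax

private lemma uopt_le_umax {n p : ℕ} (C : Matrix (Fin p) (Fin n) ℝ) (D : Fin p → ℝ)
    (umax : ℝ) (ymax : Fin p → ℝ) (x : Fin n → ℝ) : uopt C D umax ymax x ≤ umax := by
  unfold uopt
  split
  · exact min_le_left _ _
  · exact le_refl _

private lemma uopt_out {n p : ℕ} {C : Matrix (Fin p) (Fin n) ℝ} {D : Fin p → ℝ}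
    (hD : ∀ i, 0 < D i) (umax : ℝ) (ymax : Fin p → ℝ) (x : Fin n → ℝ) (i : Fin p) :
    C.mulVec x i + D i * uopt C D umax ymax x ≤ ymax i := by
  have hne : (Finset.univ : Finset (Fin p)).Nonempty := ⟨i, Finset.mem_univ i⟩
  rw [uopt, dif_pos hne]
  have h1 : min umax (Finset.univ.inf' hne fun j => (ymax j - C.mulVec x j) / D j)
      ≤ (ymax i - C.mulVec x i) / D i :=
    le_trans (min_le_right _ _) (Finset.inf'_le _ (Finset.mem_univ i))
  have h2 := (le_div_iff₀ (hD i)).mp h1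
  nlinarith [h2]

private lemma uopt_active {n p : ℕ} {C : Matrix (Fin p) (Fin n) ℝ} {D : Fin p → ℝ}
    (hD : ∀ i, 0 < D i) (umax : ℝ) (ymax : Fin p → ℝ) (x : Fin n → ℝ) :
    uopt C D umax ymax x = umax
      ∨ ∃ i, C.mulVec x i + D i * uopt C D umax ymax x = ymax i := by
  rw [uopt]
  split
  case isTrue h =>
    rcases le_total umax (Finset.univ.inf' h fun i => (ymax i - C.mulVec x i) / D i)
      with hle | hle
    · left; exact min_eq_left hle
    · right
      obtain ⟨i, _, hi⟩ := Finset.exists_mem_eq_inf' h fun i => (ymax i - C.mulVec x i) / D i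
      refine ⟨i, ?_⟩
      rw [min_eq_right hle, hi, mul_div_cancel₀ _ (ne_of_gt (hD i))]
      ring
  case isFalse => left; rfl

/-- State trajectory of the greedy control. -/
noncomputable def gstate {n p : ℕ} (A : Matrix (Fin n) (Fin n) ℝ) (B : Fin n → ℝ)
    (C : Matrix (Fin p) (Fin n) ℝ) (D : Fin p → ℝ) (x₀ : Fin n → ℝ)
    (umax : ℝ) (ymax : Fin p → ℝ) : ℕ → (Fin n → ℝ)
  | 0 => x₀
  | t + 1 => A.mulVec (gstate A B C D x₀ umax ymax t)
      + (uopt C D umax ymax (gstate A B C D x₀ umax ymax t)) • B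

/-- The greedy control. -/
noncomputable def gu {n p : ℕ} (A : Matrix (Fin n) (Fin n) ℝ) (B : Fin n → ℝ)
    (C : Matrix (Fin p) (Fin n) ℝ) (D : Fin p → ℝ) (x₀ : Fin n → ℝ)
    (umax : ℝ) (ymax : Fin p → ℝ) (t : ℕ) : ℝ :=
  uopt C D umax ymax (gstate A B C D x₀ umax ymax t)

private lemma ltraj_gu {n p : ℕ} (A : Matrix (Fin n) (Fin n) ℝ) (B : Fin n → ℝ)
    (C : Matrix (Fin p) (Fin n) ℝ) (D : Fin p → ℝ) (x₀ : Fin n → ℝ)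
    (umax : ℝ) (ymax : Fin p → ℝ) (t : ℕ) :
    ltraj A B x₀ (gu A B C D x₀ umax ymax) t = gstate A B C D x₀ umax ymax t := by
  induction t with
  | zero => rfl
  | succ t ih =>
    show A.mulVec (ltraj A B x₀ (gu A B C D x₀ umax ymax) t)
        + gu A B C D x₀ umax ymax t • B = _
    rw [ih]
    rfl

/-- Any feasible input has partial sums dominated by those of the greedy input. -/
private lemma psum_le {n p tf : ℕ} {A : Matrix (Fin n) (Fin n) ℝ} {B : Fin n → ℝ}
    {C : Matrix (Fin p) (Fin n) ℝ} {D : Fin p → ℝ} {x₀ : Fin n → ℝ}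
    {umax : ℝ} {ymax : Fin p → ℝ}
    (hD : ∀ i, 0 < D i)
    (hg : ∀ t < tf, ∀ i, impulse A B C D (t + 1) i ≤ impulse A B C D t i)
    (v : ℕ → ℝ) (hv : LFeasible A B C D x₀ umax ymax tf v) :
    ∀ t ≤ tf + 1,
      ∑ s ∈ Finset.range t, (v s - gu A B C D x₀ umax ymax s) ≤ 0 := by
  intro t
  induction t using Nat.strong_induction_on with
  | _ t ih =>
    intro ht
    match t, ht with
    | 0, _ => simp
    | m + 1, ht =>
      have hm : m ≤ tf := by omega
      rcases uopt_active hD umax ymax (gstate A B C D x₀ umax ymax m) with hcase | ⟨i, hact⟩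
      · -- input constraint active at m
        rw [Finset.sum_range_succ]
        have h1 : ∑ s ∈ Finset.range m, (v s - gu A B C D x₀ umax ymax s) ≤ 0 :=
          ih m (by omega) (by omega)
        have h2 : v m ≤ umax := (hv m hm).1
        have h3 : gu A B C D x₀ umax ymax m = umax := hcase
        linarith
      · -- output constraint i active at m
        set u := gu A B C D x₀ umax ymax with hu
        have hui : C.mulVec (ltraj A B x₀ u m) i + D i * u m = ymax i := by
          rw [hu, ltraj_gu]
          exact hact
        have hvi : C.mulVec (ltraj A B x₀ v m) i + D i * v m ≤ ymax i := (hv m hm).2 i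
        rw [out_closed] at hui hvi
        have hkey : ∑ s ∈ Finset.range (m + 1),
            impulse A B C D (m - s) i * (v s - u s) ≤ 0 := by
          have hsub : ∑ s ∈ Finset.range (m + 1), impulse A B C D (m - s) i * (v s - u s)
              = (∑ s ∈ Finset.range (m + 1), impulse A B C D (m - s) i * v s)
                - ∑ s ∈ Finset.range (m + 1), impulse A B C D (m - s) i * u s := by
            rw [← Finset.sum_sub_distrib]
            exact Finset.sum_congr rfl fun s _ => by ring
          rw [hsub]
          linarith
        have habel := Finset.sum_range_by_parts
          (fun s => impulse A B C D (m - s) i) (fun s => v s - u s) (m + 1)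
        simp only [smul_eq_mul, Nat.add_sub_cancel, Nat.sub_self] at habel
        have hf0 : impulse A B C D 0 i = D i := rfl
        rw [hf0] at habel
        have hcorr : ∑ s ∈ Finset.range m,
            (impulse A B C D (m - (s + 1)) i - impulse A B C D (m - s) i)
              * ∑ r ∈ Finset.range (s + 1), (v r - u r) ≤ 0 := by
          refine Finset.sum_nonpos fun s hs => ?_
          simp only [Finset.mem_range] at hs
          have hTs : ∑ r ∈ Finset.range (s + 1), (v r - u r) ≤ 0 :=
            ih (s + 1) (by omega) (by omega)
          have hmono : impulse A B C D (m - s) i ≤ impulse A B C D (m - (s + 1)) i := by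
            have hms : m - s = (m - (s + 1)) + 1 := by omega
            rw [hms]
            exact hg (m - (s + 1)) (by omega) i
          exact mul_nonpos_of_nonneg_of_nonpos (by linarith) hTs
        rw [habel] at hkey
        have hDT : D i * ∑ s ∈ Finset.range (m + 1), (v s - u s) ≤ 0 := by linarith
        by_contra hcon
        push_neg at hcon
        nlinarith [hD i]

end BangRideAux

/-- Theorem 3: for a linear monotone problem with nonnegative data, strictly positive
feedthrough, and decreasing impulse response on the horizon, there is an optimal
solution of bang-ride type: at least one inequality constraint is active at every
time step. -/
theorem exists_bang_ride_optimal_linear {n p tf : ℕ}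
    (A : Matrix (Fin n) (Fin n) ℝ) (B : Fin n → ℝ)
    (C : Matrix (Fin p) (Fin n) ℝ) (D : Fin p → ℝ) (E : Fin n → ℝ) (F : ℝ)
    (x₀ : Fin n → ℝ) (umax : ℝ) (ymax : Fin p → ℝ)
    (hA : ∀ i j, 0 ≤ A i j) (hB : ∀ i, 0 ≤ B i)
    (hC : ∀ i j, 0 ≤ C i j) (hD : ∀ i, 0 < D i)
    (hE : ∀ i, 0 ≤ E i) (hF : 0 ≤ F)
    -- decreasing impulse response on the horizon
    (hg : ∀ t < tf, ∀ i, impulse A B C D (t + 1) i ≤ impulse A B C D t i)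
    -- an optimal solution exists
    (hex : ∃ u, LOptimal A B C D E F x₀ umax ymax tf u) :
    ∃ ustar, LOptimal A B C D E F x₀ umax ymax tf ustar ∧
      ∀ t ≤ tf, ustar t = umax ∨
        ∃ i, C.mulVec (ltraj A B x₀ ustar t) i + D i * ustar t = ymax i := by
  classical
  have hApow : ∀ (k : ℕ) (i j : Fin n), 0 ≤ (A ^ k) i j := by
    intro k
    induction k with
    | zero =>
      intro i j
      rw [pow_zero, Matrix.one_apply]
      split <;> norm_num
    | succ k ih =>
      intro i j
      rw [pow_succ, Matrix.mul_apply]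
      exact Finset.sum_nonneg fun l _ => mul_nonneg (ih i l) (hA l j)
  have hcoef : ∀ k : ℕ, 0 ≤ E ⬝ᵥ (A ^ k).mulVec B := by
    intro k
    simp only [dotProduct, Matrix.mulVec]
    refine Finset.sum_nonneg fun i _ => mul_nonneg (hE i) ?_
    exact Finset.sum_nonneg fun j _ => mul_nonneg (hApow k i j) (hB j)
  refine ⟨gu A B C D x₀ umax ymax, ⟨?_, ?_⟩, ?_⟩
  · -- feasibility of the greedy control
    intro t _
    constructor
    · exact uopt_le_umax C D umax ymax _
    · intro i
      rw [ltraj_gu]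
      exact uopt_out hD umax ymax _ i
  · -- optimality of the greedy control
    intro v hv
    have hps := psum_le hD hg v hv
    set u := gu A B C D x₀ umax ymax with hu
    set c : ℕ → ℝ := fun s => F + ∑ k ∈ Finset.range (tf - s), E ⬝ᵥ (A ^ k).mulVec B
      with hc
    have habel := Finset.sum_range_by_parts c (fun s => v s - u s) (tf + 1)
    simp only [smul_eq_mul, Nat.add_sub_cancel] at habel
    have hctf : c tf = F := by simp [hc]
    rw [hctf] at habel
    have hT : ∑ s ∈ Finset.range (tf + 1), (v s - u s) ≤ 0 := hps (tf + 1) le_rfl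
    have hcorr : 0 ≤ ∑ s ∈ Finset.range tf,
        (c (s + 1) - c s) * ∑ r ∈ Finset.range (s + 1), (v r - u r) := by
      refine Finset.sum_nonneg fun s hs => ?_
      simp only [Finset.mem_range] at hs
      have hTs : ∑ r ∈ Finset.range (s + 1), (v r - u r) ≤ 0 := hps (s + 1) (by omega)
      have hdc : c (s + 1) - c s = -(E ⬝ᵥ (A ^ (tf - (s + 1))).mulVec B) := by
        have h1 : tf - s = (tf - (s + 1)) + 1 := by omega
        simp only [hc]
        rw [h1, Finset.sum_range_succ]
        ring
      rw [hdc]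
      have := hcoef (tf - (s + 1))
      nlinarith
    have hkey : ∑ s ∈ Finset.range (tf + 1), c s * (v s - u s) ≤ 0 := by
      rw [habel]
      nlinarith
    have hsub : ∑ s ∈ Finset.range (tf + 1), c s * (v s - u s)
        = (∑ s ∈ Finset.range (tf + 1), c s * v s)
          - ∑ s ∈ Finset.range (tf + 1), c s * u s := by
      rw [← Finset.sum_sub_distrib]
      exact Finset.sum_congr rfl fun s _ => by ring
    rw [hsub] at hkey
    rw [cost_closed A B E F x₀ tf v, cost_closed A B E F x₀ tf u]
    have hcv : ∀ w : ℕ → ℝ,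
        ∑ s ∈ Finset.range (tf + 1),
          (F + ∑ k ∈ Finset.range (tf - s), E ⬝ᵥ (A ^ k).mulVec B) * w s
        = ∑ s ∈ Finset.range (tf + 1), c s * w s := fun w => rfl
    rw [hcv v, hcv u]
    linarith
  · -- bang-ride property
    intro t _
    rw [ltraj_gu]
    exact uopt_active hD umax ymax _
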